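/- arXiv:1609.08816 — 2 statements merged into one kernel-verified Lean document; each statement's English description precedes it below -/
import Mathlib

section
/- Let fUZ : ℝ × ℝ → ℝ and fWU : ℝ × ℝ → ℝ be nonnegative measurable functions, let pYU : ℝ → ℝ be a bounded measurable function, and let h : ℝ → ℝ be measurable. Define fWZ(w, z) = ∫ fWU(w, u) fUZ(u, z) du. Assume: (a) for almost every z, the function (w, u) ↦ |h(w)| fWU(w, u) fUZ(u, z) is integrable on ℝ² and u ↦ |pYU(u)| fUZ(u, z) is integrable on ℝ; (b) the completeness condition: for every measurable g : ℝ → ℝ such that u ↦ |g(u)| fUZ(u, z) is integrable for almost every z, if ∫ g(u) fUZ(u, z) du = 0 for almost every z then g(u) = 0 for almost every u; (c) h solves the integral equation: for almost every z, ∫ pYU(u) fUZ(u, z) du = ∫ h(w) fWZ(w, z) dw. Then for almost every u, ∫ h(w) fWU(w, u) dw = pYU(u). -/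
/-! Set `g u = ∫ h(w) fWU(w, u) dw - pYU(u)`. By Fubini, `∫ g(u) fUZ(u, z) du` equals
`∫ h(w) fWZ(w, z) dw - ∫ pYU(u) fUZ(u, z) du`, which vanishes for almost every `z` by the
integral equation; completeness then forces `g = 0` almost everywhere. -/

open MeasureTheory

namespace MeasureTheory

variable {α β : Type*} [MeasurableSpace α] [MeasurableSpace β] {μ : Measure α} {ν : Measure β}

theorem integrable_abs_mul_iff {f k : α → ℝ} (hk : ∀ x, 0 ≤ k x)
    (hfk : AEStronglyMeasurable (fun x => f x * k x) μ) :
    Integrable (fun x => |f x| * k x) μ ↔ Integrable (fun x => f x * k x) μ := by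
  have hnorm : (fun x => |f x| * k x) = fun x => ‖f x * k x‖ := by
    ext x
    rw [Real.norm_eq_abs, abs_mul, abs_of_nonneg (hk x)]
  rw [hnorm, integrable_norm_iff hfk]

variable [SFinite μ] [SFinite ν] {f : α → ℝ} {K : α × β → ℝ} {L : β → ℝ}

theorem Integrable.integral_mul_kernel_mul
    (hF : Integrable (fun p : α × β => f p.1 * K p * L p.2) (μ.prod ν)) :
    Integrable (fun b => (∫ a, f a * K (a, b) ∂μ) * L b) ν := by
  simpa only [integral_mul_const] using hF.integral_prod_right

theorem integral_integral_mul_kernel_mul_swap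
    (hF : Integrable (fun p : α × β => f p.1 * K p * L p.2) (μ.prod ν)) :
    ∫ b, (∫ a, f a * K (a, b) ∂μ) * L b ∂ν = ∫ a, f a * ∫ b, K (a, b) * L b ∂ν ∂μ := by
  calc ∫ b, (∫ a, f a * K (a, b) ∂μ) * L b ∂ν
      = ∫ b, ∫ a, f a * K (a, b) * L b ∂μ ∂ν := by simp only [integral_mul_const]
    _ = ∫ a, ∫ b, f a * K (a, b) * L b ∂ν ∂μ := (integral_integral_swap hF).symm
    _ = ∫ a, f a * ∫ b, K (a, b) * L b ∂ν ∂μ := by simp only [mul_assoc, integral_const_mul]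

end MeasureTheory

theorem stmt_4_general (fUZ fWU : ℝ × ℝ → ℝ) (pYU h : ℝ → ℝ)
    (hfUZ_meas : Measurable fUZ) (hfUZ_nonneg : ∀ p, 0 ≤ fUZ p)
    (hfWU_meas : Measurable fWU) (hfWU_nonneg : ∀ p, 0 ≤ fWU p)
    (hpYU_meas : Measurable pYU)
    (hh_meas : Measurable h)
    (fWZ : ℝ → ℝ → ℝ) (hfWZ : ∀ w z, fWZ w z = ∫ u, fWU (w, u) * fUZ (u, z))
    -- (a) integrability conditions
    (hint₁ : ∀ᵐ z, Integrable (fun p : ℝ × ℝ => |h p.1| * fWU (p.1, p.2) * fUZ (p.2, z)))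
    (hint₂ : ∀ᵐ z, Integrable (fun u => |pYU u| * fUZ (u, z)))
    -- (b) completeness condition
    (hcomplete : ∀ g : ℝ → ℝ, Measurable g →
      (∀ᵐ z, Integrable (fun u => |g u| * fUZ (u, z))) →
      (∀ᵐ z, ∫ u, g u * fUZ (u, z) = 0) → (∀ᵐ u, g u = 0))
    -- (c) h solves the integral equation
    (hsol : ∀ᵐ z, ∫ u, pYU u * fUZ (u, z) = ∫ w, h w * fWZ w z) :
    ∀ᵐ u, ∫ w, h w * fWU (w, u) = pYU u := by
  set g : ℝ → ℝ := fun u => (∫ w, h w * fWU (w, u)) - pYU u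
  have hg_meas : Measurable g := by
    refine Measurable.sub ?_ hpYU_meas
    exact (StronglyMeasurable.integral_prod_right'
      (f := fun p : ℝ × ℝ => h p.2 * fWU (p.2, p.1)) (by fun_prop)).measurable
  have hF : ∀ᵐ z, Integrable (fun p : ℝ × ℝ => h p.1 * fWU p * fUZ (p.2, z)) := by
    filter_upwards [hint₁] with z hz
    simp only [mul_assoc] at hz ⊢
    exact (integrable_abs_mul_iff (fun p => mul_nonneg (hfWU_nonneg p) (hfUZ_nonneg _))
      (by fun_prop)).1 hz
  have hP : ∀ᵐ z, Integrable (fun u => pYU u * fUZ (u, z)) := by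
    filter_upwards [hint₂] with z hz
    exact (integrable_abs_mul_iff (fun u => hfUZ_nonneg _) (by fun_prop)).1 hz
  have hg_int : ∀ᵐ z, Integrable (fun u => g u * fUZ (u, z)) := by
    filter_upwards [hF, hP] with z hFz hPz
    simpa only [g, sub_mul, Pi.sub_def] using hFz.integral_mul_kernel_mul.sub hPz
  refine (hcomplete g hg_meas ?_ ?_).mono fun u hu => sub_eq_zero.1 hu
  · filter_upwards [hg_int] with z hz
    exact (integrable_abs_mul_iff (fun u => hfUZ_nonneg _) (by fun_prop)).2 hz
  · filter_upwards [hF, hP, hsol] with z hFz hPz hsolz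
    simp only [g, sub_mul]
    rw [integral_sub hFz.integral_mul_kernel_mul hPz, integral_integral_mul_kernel_mul_swap hFz,
      hsolz, sub_eq_zero]
    simp only [hfWZ]

theorem stmt_4 (fUZ fWU : ℝ × ℝ → ℝ) (pYU h : ℝ → ℝ)
    (hfUZ_meas : Measurable fUZ) (hfUZ_nonneg : ∀ p, 0 ≤ fUZ p)
    (hfWU_meas : Measurable fWU) (hfWU_nonneg : ∀ p, 0 ≤ fWU p)
    (hpYU_meas : Measurable pYU) (hpYU_bdd : ∃ C, ∀ u, |pYU u| ≤ C)
    (hh_meas : Measurable h)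
    (fWZ : ℝ → ℝ → ℝ) (hfWZ : ∀ w z, fWZ w z = ∫ u, fWU (w, u) * fUZ (u, z))
    -- (a) integrability conditions
    (hint₁ : ∀ᵐ z, Integrable (fun p : ℝ × ℝ => |h p.1| * fWU (p.1, p.2) * fUZ (p.2, z)))
    (hint₂ : ∀ᵐ z, Integrable (fun u => |pYU u| * fUZ (u, z)))
    -- (b) completeness condition
    (hcomplete : ∀ g : ℝ → ℝ, Measurable g →
      (∀ᵐ z, Integrable (fun u => |g u| * fUZ (u, z))) →
      (∀ᵐ z, ∫ u, g u * fUZ (u, z) = 0) → (∀ᵐ u, g u = 0))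
    -- (c) h solves the integral equation
    (hsol : ∀ᵐ z, ∫ u, pYU u * fUZ (u, z) = ∫ w, h w * fWZ w z) :
    ∀ᵐ u, ∫ w, h w * fWU (w, u) = pYU u :=
  stmt_4_general fUZ fWU pYU h hfUZ_meas hfUZ_nonneg hfWU_meas hfWU_nonneg hpYU_meas hh_meas fWZ
    hfWZ hint₁ hint₂ hcomplete hsol
end

section
/- Let fWU : ℝ × ℝ → ℝ be a nonnegative measurable function, let pYU : ℝ → ℝ be a bounded measurable function, let h : ℝ → ℝ be measurable, and let fU : ℝ → ℝ be a nonnegative integrable function. Define fW(w) = ∫ fWU(w, u) fU(u) du. Assume that the function (w, u) ↦ |h(w)| fWU(w, u) fU(u) is integrable on ℝ², and that for almost every u, ∫ h(w) fWU(w, u) dw = pYU(u). Then ∫ h(w) fW(w) dw = ∫ pYU(u) fU(u) du. -/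
/-! Fubini: `∫ h fW = ∫∫ h(w) fWU(w,u) fU(u) du dw`, and integrating in `w` first turns the
inner integral into `pYU(u)` by the integral equation. -/

open MeasureTheory

/-- `f / |f|` is a measurable multiplier bounded by `1` that turns `|f| * g` back into `f * g`. -/
theorem Integrable.of_abs_mul {α : Type*} [MeasurableSpace α] {μ : Measure α} {f g : α → ℝ}
    (hf : Measurable f) (hg : Integrable (fun x => |f x| * g x) μ) :
    Integrable (fun x => f x * g x) μ := by
  have hbound : ∀ x, ‖f x / |f x|‖ ≤ 1 := fun x => by
    rw [Real.norm_eq_abs, abs_div, abs_abs]; exact div_self_le_one _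
  have hmeas : Measurable fun x => f x / |f x| := hf.div hf.abs
  refine (hg.bdd_mul hmeas.aestronglyMeasurable (ae_of_all _ hbound)).congr
    (ae_of_all _ fun x => ?_)
  show f x / |f x| * (|f x| * g x) = f x * g x
  rcases eq_or_ne (f x) 0 with h0 | h0
  · simp [h0]
  · rw [← mul_assoc, div_mul_cancel₀ _ (abs_ne_zero.mpr h0)]

theorem stmt_5_general (fWU : ℝ × ℝ → ℝ) (pYU h fU : ℝ → ℝ)
    (hh_meas : Measurable h)
    (fW : ℝ → ℝ) (hfW : ∀ w, fW w = ∫ u, fWU (w, u) * fU u)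
    (hint : Integrable (fun p : ℝ × ℝ => |h p.1| * fWU (p.1, p.2) * fU p.2))
    (hsol : ∀ᵐ u, ∫ w, h w * fWU (w, u) = pYU u) :
    ∫ w, h w * fW w = ∫ u, pYU u * fU u := by
  have hF : Integrable (fun p : ℝ × ℝ => h p.1 * fWU (p.1, p.2) * fU p.2) := by
    simp_rw [mul_assoc] at hint ⊢
    exact Integrable.of_abs_mul (hh_meas.comp measurable_fst) hint
  calc ∫ w, h w * fW w = ∫ w, ∫ u, h w * fWU (w, u) * fU u := by
        simp_rw [hfW, mul_assoc, integral_const_mul]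
    _ = ∫ u, ∫ w, h w * fWU (w, u) * fU u := integral_integral_swap hF
    _ = ∫ u, pYU u * fU u := by
        refine integral_congr_ae (hsol.mono fun u hu => ?_)
        simp only [integral_mul_const, hu]

theorem stmt_5 (fWU : ℝ × ℝ → ℝ) (pYU h fU : ℝ → ℝ)
    (hfWU_meas : Measurable fWU) (hfWU_nonneg : ∀ p, 0 ≤ fWU p)
    (hpYU_meas : Measurable pYU) (hpYU_bdd : ∃ C, ∀ u, |pYU u| ≤ C)
    (hh_meas : Measurable h)
    (hfU_nonneg : ∀ u, 0 ≤ fU u) (hfU_int : Integrable fU)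
    (fW : ℝ → ℝ) (hfW : ∀ w, fW w = ∫ u, fWU (w, u) * fU u)
    (hint : Integrable (fun p : ℝ × ℝ => |h p.1| * fWU (p.1, p.2) * fU p.2))
    (hsol : ∀ᵐ u, ∫ w, h w * fWU (w, u) = pYU u) :
    ∫ w, h w * fW w = ∫ u, pYU u * fU u :=
  stmt_5_general fWU pYU h fU hh_meas fW hfW hint hsol
end
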